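/- arXiv:1905.12309 — 2 statements merged into one kernel-verified Lean document; each statement's English description precedes it below -/
import Mathlib

section
/- Let N be odd and let C = (f(x)) be the ideal of (Z/4Z)[X]/(X^N - 1) generated by the image of a monic self-reciprocal divisor f of X^N - 1. Then C ∩ C^⊥ = {0}, i.e., C is an LCD code. -/
open Polynomial

/-- The reciprocal polynomial `f*(X) = a0⁻¹ X^(deg f) f(1/X)` over `ZMod 4`. -/
noncomputable def recip (f : (ZMod 4)[X]) : (ZMod 4)[X] :=
  C (f.coeff 0)⁻¹ * f.reverse

lemma monic_XpowSubOne {N : ℕ} (hN : 0 < N) :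
    ((X : (ZMod 4)[X]) ^ N - 1).Monic := by
  simpa using monic_X_pow_sub_C (1 : ZMod 4) hN.ne'

/-- The canonical representative (of degree `< N`) of an element of
`(ZMod 4)[X] ⧸ (X^N - 1)`. -/
noncomputable def rep {N : ℕ} (hN : 0 < N)
    (a : AdjoinRoot ((X : (ZMod 4)[X]) ^ N - 1)) : (ZMod 4)[X] :=
  AdjoinRoot.modByMonicHom (monic_XpowSubOne hN) a

/-- The standard bilinear form on coefficient vectors of length `N`. -/
noncomputable def innerP {N : ℕ} (hN : 0 < N)
    (a b : AdjoinRoot ((X : (ZMod 4)[X]) ^ N - 1)) : ZMod 4 :=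
  ∑ i ∈ Finset.range N, (rep hN a).coeff i * (rep hN b).coeff i

/-- The dual code of a cyclic code, i.e. of an ideal of `(ZMod 4)[X] ⧸ (X^N - 1)`,
with respect to the standard bilinear form. -/
noncomputable def dualCode {N : ℕ} (hN : 0 < N)
    (C : Ideal (AdjoinRoot ((X : (ZMod 4)[X]) ^ N - 1))) :
    Set (AdjoinRoot ((X : (ZMod 4)[X]) ^ N - 1)) :=
  {a | ∀ b ∈ C, innerP hN a b = 0}

/-!
Write `ā` for the image of `a` under `X ↦ X⁻¹ = X^(N-1)`. The standard form is
`⟨a, b⟩ = constant term of ā * b`, so multiplication by `e` has multiplication by `ē` as its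
adjoint.
As `N` is odd, `X^N - 1` is separable over `ℤ/4`, so `f` is coprime to its cofactor and `C = (f)`
contains an `e` with `c * e = c` for all `c ∈ C`. Self-reciprocity of `f` makes `C` stable under
the bar map, so `ē ∈ C`. Hence for `c ∈ C ∩ C^⊥` and any `r`,
`⟨c, r⟩ = ⟨c * e, r⟩ = ⟨c, ē * r⟩ = 0`, and nondegeneracy of the form gives `c = 0`.
-/

section Conj

variable (R : Type*) [CommRing R] (N : ℕ)

local notation "ζ" => AdjoinRoot.root (X ^ N - 1 : R[X])

theorem root_X_pow_sub_one_pow_self : ζ ^ N = 1 := by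
  have h := AdjoinRoot.mk_self (f := (X ^ N - 1 : R[X]))
  rwa [map_sub, map_pow, AdjoinRoot.mk_X, map_one, sub_eq_zero] at h

noncomputable def cyclicConj :
    AdjoinRoot (X ^ N - 1 : R[X]) →ₐ[R] AdjoinRoot (X ^ N - 1 : R[X]) :=
  AdjoinRoot.liftAlgHom _ (Algebra.ofId R _) (ζ ^ (N - 1)) <| by
    rw [eval₂_sub, eval₂_X_pow, eval₂_one, ← pow_mul, mul_comm, pow_mul,
      root_X_pow_sub_one_pow_self, one_pow, sub_self]

variable {R N}

theorem cyclicConj_root : cyclicConj R N ζ = ζ ^ (N - 1) :=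
  AdjoinRoot.liftAlgHom_root _ _ _ _

theorem cyclicConj_root_mul_root (hN : 0 < N) : cyclicConj R N ζ * ζ = 1 := by
  rw [cyclicConj_root, ← pow_succ, Nat.sub_add_cancel hN, root_X_pow_sub_one_pow_self]

theorem cyclicConj_root_pow (hN : 0 < N) {i : ℕ} (hi : i ≤ N) :
    cyclicConj R N (ζ ^ i) = ζ ^ (N - i) := by
  calc cyclicConj R N (ζ ^ i) = cyclicConj R N (ζ ^ i) * (ζ ^ i * ζ ^ (N - i)) := by
        rw [← pow_add, Nat.add_sub_cancel' hi, root_X_pow_sub_one_pow_self, mul_one]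
    _ = (cyclicConj R N ζ * ζ) ^ i * ζ ^ (N - i) := by rw [map_pow, mul_pow, mul_assoc]
    _ = ζ ^ (N - i) := by rw [cyclicConj_root_mul_root hN, one_pow, one_mul]

/-- Since `cyclicConj` sends `X` to `X⁻¹`, it maps `f` to `X^(-deg f) * f.reverse`. -/
theorem cyclicConj_mem_span_mk (hN : 0 < N) {f : R[X]} {c : R} (hf : f.reverse = C c * f)
    {x : AdjoinRoot (X ^ N - 1 : R[X])} (hx : x ∈ Ideal.span {AdjoinRoot.mk _ f}) :
    cyclicConj R N x ∈ Ideal.span {AdjoinRoot.mk _ f} := by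
  have hf_mem : cyclicConj R N (AdjoinRoot.mk _ f) ∈ Ideal.span {AdjoinRoot.mk _ f} := by
    let _ : Invertible (cyclicConj R N ζ) :=
      invertibleOfRightInverse _ ζ (cyclicConj_root_mul_root hN)
    have h := eval₂_reverse_mul_pow (algebraMap R _) (cyclicConj R N ζ) f
    rw [invOf_eq_right_inv (cyclicConj_root_mul_root hN), ← aeval_def, AdjoinRoot.aeval_eq, hf,
      ← aeval_def, aeval_algHom_apply, AdjoinRoot.aeval_eq] at h
    rw [← h, map_mul]
    exact Ideal.mul_mem_right _ _ (Ideal.mul_mem_left _ _ (Ideal.mem_span_singleton_self _))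
  obtain ⟨r, rfl⟩ := Ideal.mem_span_singleton'.mp hx
  rw [map_mul]
  exact Ideal.mul_mem_left _ _ hf_mem

end Conj

theorem isUnit_coeff_zero_of_dvd_X_pow_sub_one {R : Type*} [CommRing R] {N : ℕ} (hN : 0 < N)
    {f : R[X]} (hf : f ∣ X ^ N - 1) : IsUnit (f.coeff 0) := by
  have h : f.coeff 0 ∣ 1 := by simpa [hN.ne] using map_dvd constantCoeff hf
  exact isUnit_of_dvd_one h

theorem IsCoprime.exists_mul_eq_self_of_mul_eq_zero {S : Type*} [CommRing S] {a b : S}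
    (hab : IsCoprime a b) (h : a * b = 0) :
    ∃ e ∈ Ideal.span {a}, ∀ c ∈ Ideal.span {a}, c * e = c := by
  obtain ⟨u, v, huv⟩ := hab
  refine ⟨u * a, Ideal.mul_mem_left _ _ (Ideal.mem_span_singleton_self a), fun c hc => ?_⟩
  obtain ⟨r, rfl⟩ := Ideal.mem_span_singleton'.mp hc
  linear_combination (r * a) * huv - (r * v) * h

theorem Nat.dvd_self_sub_add_iff {N i j : ℕ} (hi : i < N) (hj : j < N) :
    N ∣ N - i + j ↔ j = i := by
  refine ⟨fun h => Nat.ModEq.eq_of_lt_of_lt ?_ hj hi,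
    fun h => by simp [h, Nat.sub_add_cancel hi.le]⟩
  calc j ≡ j + N [MOD N] := Nat.add_modEq_right.symm
    _ = N - i + j + i := by omega
    _ ≡ 0 + i [MOD N] := Nat.ModEq.add_right i (Nat.modEq_zero_iff_dvd.mpr h)
    _ = i := zero_add i

theorem reverse_eq_C_coeff_zero_mul_of_recip_eq_self {f : (ZMod 4)[X]}
    (hf0 : IsUnit (f.coeff 0)) (hf : recip f = f) : f.reverse = C (f.coeff 0) * f := by
  calc f.reverse = C (f.coeff 0 * (f.coeff 0)⁻¹) * f.reverse := by
        rw [ZMod.mul_inv_of_unit _ hf0, C_1, one_mul]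
    _ = C (f.coeff 0) * f := by rw [C_mul, mul_assoc, ← recip, hf]

instance : Fact (1 < 4) := ⟨by decide⟩

section Inner

variable {N : ℕ} (hN : 0 < N)

local notation "ζ" => AdjoinRoot.root ((X : (ZMod 4)[X]) ^ N - 1)

theorem coeff_zero_rep_root_pow (m : ℕ) :
    (rep hN (ζ ^ m)).coeff 0 = if N ∣ m then 1 else 0 := by
  have hdeg : (X ^ (m % N) : (ZMod 4)[X]).degree < (X ^ N - 1 : (ZMod 4)[X]).degree := by
    rw [degree_X_pow, ← C_1, degree_X_pow_sub_C hN]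
    exact_mod_cast Nat.mod_lt m hN
  rw [pow_eq_pow_mod m (root_X_pow_sub_one_pow_self (ZMod 4) N), ← AdjoinRoot.mk_X, ← map_pow,
    rep, AdjoinRoot.modByMonicHom_mk, (modByMonic_eq_self_iff (monic_XpowSubOne hN)).mpr hdeg,
    coeff_X_pow]
  simp only [Nat.dvd_iff_mod_eq_zero, eq_comm]

theorem natDegree_rep_lt (a : AdjoinRoot ((X : (ZMod 4)[X]) ^ N - 1)) :
    (rep hN a).natDegree < N := by
  obtain ⟨p, rfl⟩ := AdjoinRoot.mk_surjective a
  have hdeg : (X ^ N - 1 : (ZMod 4)[X]).natDegree = N := by rw [← C_1, natDegree_X_pow_sub_C]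
  have hne : (X ^ N - 1 : (ZMod 4)[X]) ≠ 1 := fun h => by simp [h, hN.ne] at hdeg
  simpa [rep, hdeg] using natDegree_modByMonic_lt p (monic_XpowSubOne hN) hne

theorem sum_coeff_rep_smul_root_pow (a : AdjoinRoot ((X : (ZMod 4)[X]) ^ N - 1)) :
    ∑ i ∈ Finset.range N, (rep hN a).coeff i • ζ ^ i = a := by
  rw [← aeval_eq_sum_range' (natDegree_rep_lt hN a), AdjoinRoot.aeval_eq]
  exact AdjoinRoot.mk_leftInverse _ a

theorem coeff_rep_sum_smul {ι : Type*} (s : Finset ι) (c : ι → ZMod 4)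
    (x : ι → AdjoinRoot ((X : (ZMod 4)[X]) ^ N - 1)) (k : ℕ) :
    (rep hN (∑ i ∈ s, c i • x i)).coeff k = ∑ i ∈ s, c i * (rep hN (x i)).coeff k := by
  simp [rep]

theorem coeff_rep_eq_coeff_zero_rep_cyclicConj_mul (a : AdjoinRoot ((X : (ZMod 4)[X]) ^ N - 1))
    {i : ℕ} (hi : i < N) :
    (rep hN a).coeff i = (rep hN (cyclicConj _ N (ζ ^ i) * a)).coeff 0 := by
  calc (rep hN a).coeff i
      = ∑ j ∈ Finset.range N, (rep hN a).coeff j * if j = i then 1 else 0 := by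
        simp [hi]
    _ = ∑ j ∈ Finset.range N, (rep hN a).coeff j * (rep hN (ζ ^ (N - i + j))).coeff 0 :=
        Finset.sum_congr rfl fun j hj => by
          simp only [coeff_zero_rep_root_pow, Nat.dvd_self_sub_add_iff hi (Finset.mem_range.mp hj)]
    _ = (rep hN (∑ j ∈ Finset.range N, (rep hN a).coeff j • ζ ^ (N - i + j))).coeff 0 :=
        (coeff_rep_sum_smul hN _ _ _ 0).symm
    _ = (rep hN (cyclicConj _ N (ζ ^ i) * a)).coeff 0 := by
        conv_rhs => rw [← sum_coeff_rep_smul_root_pow hN a]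
        simp only [cyclicConj_root_pow hN hi.le, Finset.mul_sum, mul_smul_comm, pow_add]

theorem innerP_eq_coeff_zero_rep (a b : AdjoinRoot ((X : (ZMod 4)[X]) ^ N - 1)) :
    innerP hN a b = (rep hN (cyclicConj _ N a * b)).coeff 0 := by
  calc innerP hN a b
      = ∑ i ∈ Finset.range N,
          (rep hN a).coeff i * (rep hN (cyclicConj _ N (ζ ^ i) * b)).coeff 0 :=
        Finset.sum_congr rfl fun i hi => by
          rw [coeff_rep_eq_coeff_zero_rep_cyclicConj_mul hN b (Finset.mem_range.mp hi)]
    _ = (rep hN (∑ i ∈ Finset.range N,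
          (rep hN a).coeff i • (cyclicConj _ N (ζ ^ i) * b))).coeff 0 :=
        (coeff_rep_sum_smul hN _ _ _ 0).symm
    _ = (rep hN (cyclicConj _ N a * b)).coeff 0 := by
        conv_rhs => rw [← sum_coeff_rep_smul_root_pow hN a]
        simp only [map_sum, map_smul, Finset.sum_mul, smul_mul_assoc]

theorem innerP_comm (a b : AdjoinRoot ((X : (ZMod 4)[X]) ^ N - 1)) :
    innerP hN a b = innerP hN b a :=
  Finset.sum_congr rfl fun _ _ => mul_comm _ _

theorem innerP_mul_left (a e b : AdjoinRoot ((X : (ZMod 4)[X]) ^ N - 1)) :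
    innerP hN (a * e) b = innerP hN a (cyclicConj _ N e * b) := by
  rw [innerP_eq_coeff_zero_rep, innerP_eq_coeff_zero_rep, map_mul, mul_assoc]

theorem innerP_zero_left (b : AdjoinRoot ((X : (ZMod 4)[X]) ^ N - 1)) : innerP hN 0 b = 0 := by
  simp [innerP_eq_coeff_zero_rep, rep]

theorem eq_zero_of_forall_innerP_eq_zero {a : AdjoinRoot ((X : (ZMod 4)[X]) ^ N - 1)}
    (h : ∀ b, innerP hN a b = 0) : a = 0 := by
  rw [← sum_coeff_rep_smul_root_pow hN a]
  refine Finset.sum_eq_zero fun i hi => ?_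
  rw [coeff_rep_eq_coeff_zero_rep_cyclicConj_mul hN a (Finset.mem_range.mp hi),
    ← innerP_eq_coeff_zero_rep, innerP_comm, h, zero_smul]

end Inner

theorem lcd_of_selfReciprocal_general (N : ℕ) (hN : Odd N) (f : (ZMod 4)[X])
    (hsr : recip f = f)
    (hdvd : f ∣ (X : (ZMod 4)[X]) ^ N - 1)
    (C : Ideal (AdjoinRoot ((X : (ZMod 4)[X]) ^ N - 1)))
    (hC : C = Ideal.span {AdjoinRoot.mk _ f}) :
    (C : Set (AdjoinRoot ((X : (ZMod 4)[X]) ^ N - 1))) ∩ dualCode hN.pos C = {0} := by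
  have hrev := reverse_eq_C_coeff_zero_mul_of_recip_eq_self
    (isUnit_coeff_zero_of_dvd_X_pow_sub_one hN.pos hdvd) hsr
  obtain ⟨g, hfg⟩ := hdvd
  have hcop : IsCoprime f g := by
    have hN_unit : IsUnit (N : ZMod 4) :=
      (ZMod.isUnit_iff_coprime N 4).mpr (Nat.Coprime.pow_right 2 (Nat.coprime_two_right.mpr hN))
    have hsep : (f * g).Separable := by
      simpa [hfg] using separable_X_pow_sub_C_unit (1 : (ZMod 4)ˣ) hN_unit
    exact hsep.isCoprime
  obtain ⟨e, he, hce⟩ := (hcop.map (AdjoinRoot.mk _)).exists_mul_eq_self_of_mul_eq_zero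
    (by rw [← map_mul, ← hfg, AdjoinRoot.mk_self])
  subst hC
  refine Set.eq_singleton_iff_unique_mem.mpr
    ⟨⟨Ideal.zero_mem _, fun b _ => innerP_zero_left hN.pos b⟩, ?_⟩
  rintro c ⟨hc, hc_dual⟩
  refine eq_zero_of_forall_innerP_eq_zero hN.pos fun r => ?_
  rw [← hce c hc, innerP_mul_left]
  exact hc_dual _ (Ideal.mul_mem_right r _ (cyclicConj_mem_span_mk hN.pos hrev he))

theorem lcd_of_selfReciprocal (N : ℕ) (hN : Odd N) (f : (ZMod 4)[X])
    (hf : f.Monic) (hsr : recip f = f)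
    (hdvd : f ∣ (X : (ZMod 4)[X]) ^ N - 1)
    (C : Ideal (AdjoinRoot ((X : (ZMod 4)[X]) ^ N - 1)))
    (hC : C = Ideal.span {AdjoinRoot.mk _ f}) :
    (C : Set (AdjoinRoot ((X : (ZMod 4)[X]) ^ N - 1))) ∩ dualCode hN.pos C = {0} :=
  lcd_of_selfReciprocal_general N hN f hsr hdvd C hC
end

section
/- Let N be odd and let g and h be monic divisors of X^N - 1 in (Z/4Z)[X] with gcd(g, h) = 1. If the set of monic irreducible factors of h* equals the union of the sets of monic irreducible factors of g and of h, then g = 1 and h is self-reciprocal. -/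
/-
Reduction modulo 2 is faithful on monic divisors of `X^N - 1` over `ZMod 4`, because
`X^N - 1` is squarefree over `ZMod 2` for odd `N`: a monic divisor is determined by its
reduction, and by Hensel lifting the irreducible factors of the reduction of a divisor are
exactly the reductions of its monic irreducible factors.
So the hypothesis says that the reductions of `h*` and of `g h` are squarefree monic polynomials
with the same prime factors, hence equal. As `deg h* = deg h`, this forces `g = 1`; then `h*`
and `h` have the same reduction, so `h* = h`.
-/

open Polynomial

lemma Squarefree.dvd_of_forall_prime_dvd {M : Type*} [CommMonoidWithZero M] [Nontrivial M]
    [UniqueFactorizationMonoid M] {a b : M} (ha : Squarefree a)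
    (h : ∀ p, Prime p → p ∣ a → p ∣ b) : a ∣ b := by
  induction a using UniqueFactorizationMonoid.induction_on_prime with
  | h₁ => exact absurd ha not_squarefree_zero
  | h₂ x hx => exact hx.dvd
  | h₃ x p _ hp ih =>
    exact (IsRelPrime.of_squarefree_mul ha).mul_dvd (h p hp (dvd_mul_right p x))
      (ih ha.of_mul_right fun q hq hqx => h q hq (hqx.mul_left p))

namespace Polynomial

lemma exists_mul_add_mul_eq_of_degree_lt {R : Type*} [CommRing R] [Nontrivial R] {q r e : R[X]}
    (hq : q.Monic) (hqr : IsCoprime q r) (he : e.degree < q.degree + r.degree) :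
    ∃ s t : R[X], s * r + t * q = e ∧ s.degree < q.degree ∧ t.degree < r.degree := by
  obtain ⟨u, v, huv⟩ := hqr
  set s := e * v %ₘ q
  set t := e * u + (e * v /ₘ q) * r
  have hst : s * r + t * q = e := by
    linear_combination r * modByMonic_add_div (e * v) q + e * huv
  have hs : s.degree < q.degree := degree_modByMonic_lt _ hq
  refine ⟨s, t, hst, hs, ?_⟩
  have hr : r.degree ≠ ⊥ := fun h => by simp [h] at he
  have hsr : (s * r).degree < q.degree + r.degree :=
    (degree_mul_le s r).trans_lt (WithBot.add_lt_add_right hr hs)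
  have htq : (t * q).degree < q.degree + r.degree := by
    rw [eq_sub_of_add_eq' hst]
    exact (degree_sub_le _ _).trans_lt (max_lt he hsr)
  rw [hq.degree_mul, add_comm] at htq
  exact (WithBot.add_lt_add_iff_left (by simpa using hq.ne_zero)).1 htq

lemma squarefree_X_pow_sub_one {K : Type*} [Field K] {N : ℕ} (hN : (N : K) ≠ 0) :
    Squarefree ((X : K[X]) ^ N - 1) := by
  simpa using (separable_X_pow_sub_C (1 : K) hN one_ne_zero).squarefree

lemma isUnit_coeff_zero_of_dvd_X_pow_sub_one {R : Type*} [CommRing R] {d : R[X]} {N : ℕ}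
    (hN : N ≠ 0) (hd : d ∣ X ^ N - 1) : IsUnit (d.coeff 0) := by
  obtain ⟨k, hk⟩ := hd
  have h0 := congrArg (coeff · 0) hk
  simp only [coeff_sub, coeff_X_pow, coeff_one_zero, mul_coeff_zero, if_neg hN.symm] at h0
  exact IsUnit.of_mul_eq_one (-k.coeff 0) (by linear_combination h0)

lemma Monic.eq_of_squarefree_of_forall_prime_dvd_iff {K : Type*} [Field K]
    {a b : K[X]} (ha : a.Monic) (hb : b.Monic) (hsa : Squarefree a) (hsb : Squarefree b)
    (h : ∀ p, Prime p → (p ∣ a ↔ p ∣ b)) : a = b :=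
  eq_of_monic_of_associated ha hb <| associated_of_dvd_dvd
    (hsa.dvd_of_forall_prime_dvd fun p hp => (h p hp).1)
    (hsb.dvd_of_forall_prime_dvd fun p hp => (h p hp).2)

end Polynomial

namespace ZMod4

instance : Nontrivial (ZMod 4) := ⟨0, 1, by decide⟩

abbrev mod2 : ZMod 4 →+* ZMod 2 := ZMod.castHom (by norm_num) (ZMod 2)

lemma mod2_surjective : Function.Surjective mod2 := ZMod.ringHom_surjective _

instance nilradical_isPrime : (nilradical (ZMod 4)).IsPrime := by
  have := RingHom.ker_isPrime mod2
  have hker : nilradical (ZMod 4) = RingHom.ker mod2 := by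
    refine le_antisymm (nilradical_le_prime _) fun x hx => ⟨2, Ideal.mem_bot.2 ?_⟩
    rw [RingHom.mem_ker] at hx
    revert x; decide
  rwa [hker]

lemma four_eq_zero : (4 : (ZMod 4)[X]) = 0 := CharP.ofNat_eq_zero' _ 4 4 dvd_rfl

lemma mod2_eq_zero_iff (a : ZMod 4) : mod2 a = 0 ↔ 2 * a = 0 := by
  revert a; decide

lemma two_mul_eq_zero_iff (f : (ZMod 4)[X]) : 2 * f = 0 ↔ f.map mod2 = 0 := by
  simp only [Polynomial.ext_iff, coeff_ofNat_mul, coeff_map, coeff_zero, mod2_eq_zero_iff]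

lemma two_mul_eq_two_mul_iff {f g : (ZMod 4)[X]} : 2 * f = 2 * g ↔ f.map mod2 = g.map mod2 := by
  rw [← sub_eq_zero, ← mul_sub, two_mul_eq_zero_iff, Polynomial.map_sub, sub_eq_zero]

lemma exists_eq_two_mul_of_map_mod2_eq_zero {f : (ZMod 4)[X]} (hf : f.map mod2 = 0) :
    ∃ v, f = 2 * v := by
  have hker : RingHom.ker mod2 = Ideal.span {2} := by
    ext a
    rw [RingHom.mem_ker, Ideal.mem_span_singleton']
    revert a; decide
  have hf' : f ∈ RingHom.ker (mapRingHom mod2) := hf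
  rw [ker_mapRingHom, hker, Ideal.map_span, Set.image_singleton, Ideal.mem_span_singleton'] at hf'
  obtain ⟨v, hv⟩ := hf'
  exact ⟨v, by rw [← hv, mul_comm, map_ofNat]⟩

lemma map_mod2_two_mul (f : (ZMod 4)[X]) : (2 * f).map mod2 = 0 := by
  simp [CharTwo.two_eq_zero]

lemma degree_map_mod2_le (f : (ZMod 4)[X]) : (f.map mod2).degree ≤ (2 * f).degree := by
  refine (degree_le_iff_coeff_zero _ _).2 fun m hm => ?_
  rw [coeff_map, mod2_eq_zero_iff, ← coeff_ofNat_mul]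
  exact coeff_eq_zero_of_degree_lt hm

lemma degree_two_mul_le (f : (ZMod 4)[X]) : (2 * f).degree ≤ f.degree := by
  refine (degree_le_iff_coeff_zero _ _).2 fun m hm => ?_
  rw [coeff_ofNat_mul, coeff_eq_zero_of_degree_lt hm, mul_zero]

lemma monic_add_two_mul {p s : (ZMod 4)[X]} (hp : p.Monic) (hs : s.degree < p.degree) :
    (p + 2 * s).Monic :=
  hp.add_of_left ((degree_two_mul_le s).trans_lt hs)

lemma exists_monic_factors_of_map_mod2_eq_mul {f : (ZMod 4)[X]} {q r : (ZMod 2)[X]}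
    (hf : f.Monic) (hq : q.Monic) (hr : r.Monic) (hfqr : f.map mod2 = q * r)
    (hqr : IsCoprime q r) :
    ∃ Q R : (ZMod 4)[X],
      Q.Monic ∧ R.Monic ∧ f = Q * R ∧ Q.map mod2 = q ∧ R.map mod2 = r := by
  obtain ⟨q₀, hq₀q, hq₀deg, hq₀⟩ :=
    lifts_and_degree_eq_and_monic (mem_lifts_of_surjective mod2_surjective q) hq
  obtain ⟨r₀, hr₀r, hr₀deg, hr₀⟩ :=
    lifts_and_degree_eq_and_monic (mem_lifts_of_surjective mod2_surjective r) hr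
  obtain ⟨ε, hε⟩ := exists_eq_two_mul_of_map_mod2_eq_zero (f := f - q₀ * r₀)
    (by rw [Polynomial.map_sub, Polynomial.map_mul, hfqr, hq₀q, hr₀r, sub_self])
  have hεdeg : (ε.map mod2).degree < q.degree + r.degree := by
    have hfdeg : f.degree = (q₀ * r₀).degree := by
      rw [← hf.degree_map mod2, hfqr, hr.degree_mul, ← hq₀deg, ← hr₀deg, hr₀.degree_mul]
    calc (ε.map mod2).degree ≤ (f - q₀ * r₀).degree := hε ▸ degree_map_mod2_le ε
      _ < f.degree := degree_sub_lt_left hfdeg hf.ne_zero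
          (by rw [hf.leadingCoeff, (hq₀.mul hr₀).leadingCoeff])
      _ = q.degree + r.degree := by rw [← hf.degree_map mod2, hfqr, hr.degree_mul]
  -- Correct the lifts to `q₀ + 2s` and `r₀ + 2t`, with `2 (s r₀ + t q₀) = f - q₀ r₀`.
  obtain ⟨s', t', hst', hs', ht'⟩ := exists_mul_add_mul_eq_of_degree_lt hq hqr hεdeg
  obtain ⟨s, hss', hsdeg⟩ :=
    exists_degree_eq_of_mem_lifts (mem_lifts_of_surjective mod2_surjective s')
  obtain ⟨t, htt', htdeg⟩ :=
    exists_degree_eq_of_mem_lifts (mem_lifts_of_surjective mod2_surjective t')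
  have hcorr : 2 * (s * r₀ + t * q₀) = 2 * ε := two_mul_eq_two_mul_iff.2 <| by
    simp only [Polynomial.map_add, Polynomial.map_mul, hss', htt', hq₀q, hr₀r, hst']
  refine ⟨q₀ + 2 * s, r₀ + 2 * t, monic_add_two_mul hq₀ (by rwa [hsdeg, hq₀deg]),
    monic_add_two_mul hr₀ (by rwa [htdeg, hr₀deg]), ?_, ?_, ?_⟩
  · linear_combination hε - hcorr - s * t * four_eq_zero
  · rw [Polynomial.map_add, map_mod2_two_mul, add_zero, hq₀q]
  · rw [Polynomial.map_add, map_mod2_two_mul, add_zero, hr₀r]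

lemma dvd_map_mod2_iff {f : (ZMod 4)[X]} (hf : f.Monic) (hsq : Squarefree (f.map mod2))
    {q : (ZMod 2)[X]} (hq : Irreducible q) :
    q ∣ f.map mod2 ↔
      ∃ P ∈ {p : (ZMod 4)[X] | p.Monic ∧ Irreducible p ∧ p ∣ f}, P.map mod2 = q := by
  constructor
  · rintro ⟨r, hr⟩
    have hqm : q.Monic :=
      (by decide : ∀ a : ZMod 2, a ≠ 0 → a = 1) _ (leadingCoeff_ne_zero.2 hq.ne_zero)
    have hrm : r.Monic := hqm.of_mul_monic_left (hr ▸ hf.map mod2)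
    obtain ⟨Q, R, hQ, -, rfl, hQq, -⟩ := exists_monic_factors_of_map_mod2_eq_mul hf hqm hrm hr
      (IsRelPrime.of_squarefree_mul (hr ▸ hsq)).isCoprime
    exact ⟨Q, ⟨hQ, hQ.irreducible_of_irreducible_map_of_isPrime_nilradical mod2 Q (hQq ▸ hq),
      dvd_mul_right Q R⟩, hQq⟩
  · rintro ⟨P, ⟨-, -, hPf⟩, rfl⟩
    exact Polynomial.map_dvd mod2 hPf

lemma eq_of_map_mod2_eq {f d₁ d₂ : (ZMod 4)[X]} (hsq : Squarefree (f.map mod2))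
    (h₁ : d₁.Monic) (h₂ : d₂.Monic) (hd₁ : d₁ ∣ f) (hd₂ : d₂ ∣ f)
    (hmap : d₁.map mod2 = d₂.map mod2) : d₁ = d₂ := by
  obtain ⟨k₁, hk₁⟩ := hd₁
  obtain ⟨k₂, hk₂⟩ := hd₂
  have hkmap : k₁.map mod2 = k₂.map mod2 := by
    refine mul_left_cancel₀ (h₁.map mod2).ne_zero ?_
    rw [← Polynomial.map_mul, ← hk₁, hmap, ← Polynomial.map_mul, ← hk₂]
  obtain ⟨a, ha⟩ := exists_eq_two_mul_of_map_mod2_eq_zero (f := d₂ - d₁)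
    (by rw [Polynomial.map_sub, hmap, sub_self])
  obtain ⟨b, hb⟩ := exists_eq_two_mul_of_map_mod2_eq_zero (f := k₂ - k₁)
    (by rw [Polynomial.map_sub, hkmap, sub_self])
  rw [sub_eq_iff_eq_add'] at ha hb
  subst ha hb
  -- `d₁ k₁ = (d₁ + 2a)(k₁ + 2b)` makes `a k₁ + b d₁` vanish mod 2, so `d₁ ∣ a` mod 2
  -- because `d₁` and `k₁` are coprime mod 2; then `d₁ + 2a = d₁ (1 + 2m)`.
  have hdiff : (a * k₁ + b * d₁).map mod2 = 0 := by
    rw [← two_mul_eq_zero_iff]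
    linear_combination hk₁ - hk₂ - a * b * four_eq_zero
  have hcop : IsCoprime (d₁.map mod2) (k₁.map mod2) :=
    (IsRelPrime.of_squarefree_mul (by rwa [hk₁, Polynomial.map_mul] at hsq)).isCoprime
  rw [Polynomial.map_add, Polynomial.map_mul, Polynomial.map_mul] at hdiff
  obtain ⟨m', hm'⟩ : d₁.map mod2 ∣ a.map mod2 :=
    hcop.dvd_of_dvd_mul_right ⟨-b.map mod2, by linear_combination hdiff⟩
  obtain ⟨m, rfl⟩ := map_surjective _ mod2_surjective m'
  have ha : 2 * a = 2 * (d₁ * m) := two_mul_eq_two_mul_iff.2 (by rw [hm', Polynomial.map_mul])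
  refine (eq_of_monic_of_dvd_of_natDegree_le h₁ h₂
    ⟨1 + 2 * m, by linear_combination ha⟩ ?_).symm
  rw [← h₁.natDegree_map mod2, ← h₂.natDegree_map mod2, hmap]

lemma squarefree_map_mod2_of_dvd {N : ℕ} (hN : Odd N) {d : (ZMod 4)[X]}
    (hd : d ∣ X ^ N - 1) : Squarefree (d.map mod2) := by
  refine Squarefree.squarefree_of_dvd ?_
    (squarefree_X_pow_sub_one (ZMod.natCast_ne_zero_iff_odd.2 hN))
  simpa using Polynomial.map_dvd mod2 hd

end ZMod4

lemma recip_mul {f g : (ZMod 4)[X]} (hfg : f.leadingCoeff * g.leadingCoeff ≠ 0)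
    (hf : IsUnit (f.coeff 0)) (hg : IsUnit (g.coeff 0)) : recip (f * g) = recip f * recip g := by
  obtain ⟨u, hu⟩ := hf
  obtain ⟨v, hv⟩ := hg
  rw [recip, recip, recip, mul_coeff_zero, reverse_mul hfg, ← hu, ← hv, ← Units.val_mul,
    ZMod.inv_coe_unit, ZMod.inv_coe_unit, ZMod.inv_coe_unit, mul_inv, Units.val_mul, C_mul]
  ring

lemma recip_monic {f : (ZMod 4)[X]} (hf : IsUnit (f.coeff 0)) : (recip f).Monic := by
  obtain ⟨u, hu⟩ := hf
  refine monic_C_mul_of_mul_leadingCoeff_eq_one ?_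
  rw [reverse_leadingCoeff, trailingCoeff_eq_coeff_zero (hu ▸ u.ne_zero), ← hu,
    ZMod.inv_coe_unit, ← Units.val_mul, inv_mul_cancel, Units.val_one]

lemma natDegree_recip {f : (ZMod 4)[X]} (hf : IsUnit (f.coeff 0)) :
    (recip f).natDegree = f.natDegree := by
  obtain ⟨u, hu⟩ := hf
  rw [recip, ← hu, ZMod.inv_coe_unit, natDegree_C_mul_of_isUnit u⁻¹.isUnit, reverse_natDegree,
    natTrailingDegree_eq_zero.2 (Or.inr (hu ▸ u.ne_zero)), Nat.sub_zero]

lemma recip_X_pow_sub_one {N : ℕ} (hN : N ≠ 0) :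
    recip ((X : (ZMod 4)[X]) ^ N - 1) = X ^ N - 1 := by
  have hC : (X : (ZMod 4)[X]) ^ N - 1 = X ^ N + C (-1) := by
    rw [map_neg, map_one, sub_eq_add_neg]
  have hX : ((X : (ZMod 4)[X]) ^ N).reverse = 1 := by
    rw [← mul_one (X ^ N), reverse_X_pow_mul, ← C_1, reverse_C]
  rw [recip, hC, reverse_add_C, coeff_add, coeff_X_pow, if_neg hN.symm, coeff_C_zero, zero_add]
  simp [hX]

lemma recip_dvd_X_pow_sub_one {N : ℕ} (hN : N ≠ 0) {h : (ZMod 4)[X]} (hh : h.Monic)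
    (hd : h ∣ X ^ N - 1) : recip h ∣ X ^ N - 1 := by
  obtain ⟨k, hk⟩ := hd
  have hkm : k.Monic := hh.of_mul_monic_left (hk ▸ monic_X_pow_sub_C (1 : ZMod 4) hN)
  refine ⟨recip k, ?_⟩
  rw [← recip_mul (by simp [hh, hkm])
    (isUnit_coeff_zero_of_dvd_X_pow_sub_one hN (Dvd.intro k hk.symm))
    (isUnit_coeff_zero_of_dvd_X_pow_sub_one hN (Dvd.intro_left h hk.symm)), ← hk,
    recip_X_pow_sub_one hN]

open ZMod4 in
theorem g_eq_one_of_factors_union (N : ℕ) (hN : Odd N) (g h : (ZMod 4)[X])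
    (hg : g.Monic) (hh : h.Monic)
    (hgdvd : g ∣ (X : (ZMod 4)[X]) ^ N - 1) (hhdvd : h ∣ (X : (ZMod 4)[X]) ^ N - 1)
    (hcop : IsCoprime g h)
    (hfact : {p : (ZMod 4)[X] | p.Monic ∧ Irreducible p ∧ p ∣ recip h} =
      {p : (ZMod 4)[X] | p.Monic ∧ Irreducible p ∧ p ∣ g} ∪
        {p : (ZMod 4)[X] | p.Monic ∧ Irreducible p ∧ p ∣ h}) :
    g = 1 ∧ recip h = h := by
  have hN0 : N ≠ 0 := by rintro rfl; simp at hN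
  have hsqf : ∀ {d : (ZMod 4)[X]}, d ∣ X ^ N - 1 → Squarefree (d.map mod2) :=
    squarefree_map_mod2_of_dvd hN
  have hh0 := isUnit_coeff_zero_of_dvd_X_pow_sub_one hN0 hhdvd
  have hrm := recip_monic hh0
  have hrdvd := recip_dvd_X_pow_sub_one hN0 hh hhdvd
  have hmap : (recip h).map mod2 = g.map mod2 * h.map mod2 := by
    refine (hrm.map mod2).eq_of_squarefree_of_forall_prime_dvd_iff
      ((hg.map mod2).mul (hh.map mod2)) (hsqf hrdvd)
      (Polynomial.map_mul mod2 ▸ hsqf (hcop.mul_dvd hgdvd hhdvd)) fun q hq => ?_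
    rw [hq.dvd_mul, dvd_map_mod2_iff hrm (hsqf hrdvd) hq.irreducible, hfact,
      dvd_map_mod2_iff hg (hsqf hgdvd) hq.irreducible,
      dvd_map_mod2_iff hh (hsqf hhdvd) hq.irreducible]
    simp only [Set.mem_union, or_and_right, exists_or]
  have hg1 : g = 1 := by
    have hdeg := congrArg natDegree hmap
    rw [hrm.natDegree_map, natDegree_recip hh0, (hg.map mod2).natDegree_mul (hh.map mod2),
      hg.natDegree_map, hh.natDegree_map] at hdeg
    exact hg.natDegree_eq_zero.1 (by omega)
  refine ⟨hg1, eq_of_map_mod2_eq (hsqf dvd_rfl) hrm hh hrdvd hhdvd ?_⟩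
  rw [hmap, hg1, Polynomial.map_one, one_mul]
end
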